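/- arXiv:2109.03722 — 3 statements merged into one kernel-verified Lean document; each statement's English description precedes it below -/
import Mathlib

section
/- For any n×n real skew-symmetric matrix Λ with n ≥ 2, there exists an index pair (i, j) with 1 ≤ i < j ≤ n such that |Λ_{ij}| ≥ (1/n) · ‖Λ‖₂, where ‖·‖₂ is the spectral norm. -/
open Matrix

/-- The spectral norm (L2 operator norm) of a real n×n matrix. -/
noncomputable def matSpectralNorm (n : ℕ) (A : Matrix (Fin n) (Fin n) ℝ) : ℝ :=
  ‖(LinearMap.toContinuousLinearMap
      (Matrix.toEuclideanLin A :
        EuclideanSpace ℝ (Fin n) →ₗ[ℝ] EuclideanSpace ℝ (Fin n)))‖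

theorem skew_symmetric_large_entry (n : ℕ) (hn : 2 ≤ n)
    (Λ : Matrix (Fin n) (Fin n) ℝ) (hskew : Λᵀ = -Λ) :
    ∃ i j : Fin n, i < j ∧ (1 / (n : ℝ)) * matSpectralNorm n Λ ≤ |Λ i j| := by
  have hpos : (0 : ℝ) < n := by positivity
  have hskew' : ∀ i j, Λ j i = -Λ i j := by
    intro i j
    have := congrFun (congrFun hskew i) j
    simpa [Matrix.transpose_apply] using this
  have hdiag : ∀ i, Λ i i = 0 := by
    intro i
    have := hskew' i i
    linarith
  -- choose a maximizing entry
  haveI : Nonempty (Fin n) := ⟨⟨0, by omega⟩⟩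
  obtain ⟨⟨i₀, j₀⟩, hmax⟩ := Finite.exists_max (fun p : Fin n × Fin n => |Λ p.1 p.2|)
  set M : ℝ := |Λ i₀ j₀| with hM
  have hM0 : 0 ≤ M := abs_nonneg _
  have hmax' : ∀ i j, |Λ i j| ≤ M := fun i j => hmax (i, j)
  -- the operator norm bound
  have hbound : matSpectralNorm n Λ ≤ n * M := by
    apply ContinuousLinearMap.opNorm_le_bound _ (by positivity)
    intro x
    have hxnn : (0 : ℝ) ≤ ↑n * M * ‖x‖ := by positivity
    have key : ‖(LinearMap.toContinuousLinearMap
        (Matrix.toEuclideanLin Λ :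
          EuclideanSpace ℝ (Fin n) →ₗ[ℝ] EuclideanSpace ℝ (Fin n))) x‖ ^ 2
        ≤ (↑n * M * ‖x‖) ^ 2 := by
      have hnorm : ‖(LinearMap.toContinuousLinearMap
          (Matrix.toEuclideanLin Λ :
            EuclideanSpace ℝ (Fin n) →ₗ[ℝ] EuclideanSpace ℝ (Fin n))) x‖ ^ 2
          = ∑ i, (Λ *ᵥ (WithLp.equiv 2 (Fin n → ℝ) x)) i ^ 2 := by
        rw [EuclideanSpace.norm_eq, Real.sq_sqrt (by positivity)]
        simp [Matrix.toEuclideanLin_apply, Real.norm_eq_abs, sq_abs]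
      rw [hnorm]
      set y : Fin n → ℝ := WithLp.equiv 2 (Fin n → ℝ) x with hy
      have hxnorm : ‖x‖ ^ 2 = ∑ j, y j ^ 2 := by
        rw [EuclideanSpace.norm_eq, Real.sq_sqrt (by positivity)]
        simp [hy, Real.norm_eq_abs, sq_abs]
      have hS : (∑ j, |y j|) ^ 2 ≤ n * ∑ j, y j ^ 2 := by
        have := sq_sum_le_card_mul_sum_sq (s := Finset.univ) (f := fun j => |y j|)
        simpa [sq_abs] using this
      have hterm : ∀ i, (Λ *ᵥ y) i ^ 2 ≤ (M * ∑ j, |y j|) ^ 2 := by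
        intro i
        have h1 : |(Λ *ᵥ y) i| ≤ M * ∑ j, |y j| := by
          rw [Matrix.mulVec, dotProduct]
          calc |∑ j, Λ i j * y j| ≤ ∑ j, |Λ i j * y j| := Finset.abs_sum_le_sum_abs _ _
            _ ≤ ∑ j, M * |y j| := by
                apply Finset.sum_le_sum
                intro j _
                rw [abs_mul]
                exact mul_le_mul_of_nonneg_right (hmax' i j) (abs_nonneg _)
            _ = M * ∑ j, |y j| := by rw [Finset.mul_sum]
        have := sq_abs ((Λ *ᵥ y) i)
        nlinarith [abs_nonneg ((Λ *ᵥ y) i)]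
      calc ∑ i, (Λ *ᵥ y) i ^ 2 ≤ ∑ _i : Fin n, (M * ∑ j, |y j|) ^ 2 :=
            Finset.sum_le_sum (fun i _ => hterm i)
        _ = n * (M * ∑ j, |y j|) ^ 2 := by simp [Finset.sum_const, Finset.card_univ]
        _ ≤ (↑n * M * ‖x‖) ^ 2 := by
            have hSnn : 0 ≤ ∑ j, |y j| := Finset.sum_nonneg fun j _ => abs_nonneg _
            have hxn : 0 ≤ ‖x‖ := norm_nonneg _
            have hkey := mul_le_mul_of_nonneg_left hS
              (by positivity : (0:ℝ) ≤ (n:ℝ) * M ^ 2)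
            have hrhs : (↑n * M * ‖x‖) ^ 2 = ↑n * M ^ 2 * (↑n * ∑ j, y j ^ 2) := by
              rw [mul_pow, mul_pow, hxnorm]; ring
            have hlhs : ↑n * (M * ∑ j, |y j|) ^ 2 = ↑n * M ^ 2 * (∑ j, |y j|) ^ 2 := by
              ring
            rw [hrhs, hlhs]
            exact hkey
    have h2 := Real.sqrt_le_sqrt key
    rwa [Real.sqrt_sq (norm_nonneg _), Real.sqrt_sq hxnn] at h2
  -- conclude: (1/n) * ‖Λ‖ ≤ M
  have hfinal : (1 / (n : ℝ)) * matSpectralNorm n Λ ≤ M := by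
    rw [div_mul_eq_mul_div, one_mul, div_le_iff₀ hpos]
    linarith [hbound]
  rcases lt_trichotomy i₀ j₀ with h | h | h
  · exact ⟨i₀, j₀, h, hfinal⟩
  · -- diagonal maximizer ⇒ M = 0
    refine ⟨⟨0, by omega⟩, ⟨1, by omega⟩, by simp [Fin.lt_def], ?_⟩
    have : M = 0 := by rw [hM, h, hdiag, abs_zero]
    calc (1 / (n : ℝ)) * matSpectralNorm n Λ ≤ M := hfinal
      _ = 0 := this
      _ ≤ _ := abs_nonneg _
  · refine ⟨j₀, i₀, h, ?_⟩
    have : |Λ j₀ i₀| = M := by rw [hM, hskew' j₀ i₀, abs_neg]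
    rw [this]
    exact hfinal
end

section
/- Every accumulation point of a sequence (U_k, V_k, W_k) in O(n)³ generated by an ascent iteration satisfying: (a) f(U_{k+1},V_{k+1},W_{k+1}) ≥ f(U_k,V_k,W_k) for all k, and (b) for every non-stationary point (Ū,V̄,W̄) of f there exist ε, δ > 0 such that ‖U_k−Ū‖ < ε, ‖V_k−V̄‖ < ε, ‖W_k−W̄‖ < ε implies f(U_{k+1},V_{k+1},W_{k+1}) − f(U_k,V_k,W_k) ≥ δ; is a stationary point of the continuous function f : O(n)³ → ℝ. -/
open Matrix

attribute [local instance] Matrix.frobeniusNormedAddCommGroup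

/-- The orthogonal group O(n) over ℝ, as a subtype of n×n matrices. -/
abbrev OrthGroup (n : ℕ) := Matrix.orthogonalGroup (Fin n) ℝ

theorem accumulation_points_are_stationary (n : ℕ)
    (f : OrthGroup n × OrthGroup n × OrthGroup n → ℝ) (hf : Continuous f)
    (Stationary : Set (OrthGroup n × OrthGroup n × OrthGroup n))
    (seq : ℕ → OrthGroup n × OrthGroup n × OrthGroup n)
    (ha : ∀ k : ℕ, f (seq k) ≤ f (seq (k + 1)))
    (hb : ∀ p, p ∉ Stationary → ∃ ε > (0 : ℝ), ∃ δ > (0 : ℝ),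
      ∀ k : ℕ,
        ‖((seq k).1 : Matrix (Fin n) (Fin n) ℝ) - (p.1 : Matrix (Fin n) (Fin n) ℝ)‖ < ε →
        ‖((seq k).2.1 : Matrix (Fin n) (Fin n) ℝ) - (p.2.1 : Matrix (Fin n) (Fin n) ℝ)‖ < ε →
        ‖((seq k).2.2 : Matrix (Fin n) (Fin n) ℝ) - (p.2.2 : Matrix (Fin n) (Fin n) ℝ)‖ < ε →
        f (seq (k + 1)) - f (seq k) ≥ δ)
    (p : OrthGroup n × OrthGroup n × OrthGroup n)
    (hacc : ∃ φ : ℕ → ℕ, StrictMono φ ∧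
      Filter.Tendsto (fun k => seq (φ k)) Filter.atTop (nhds p)) :
    p ∈ Stationary := by
  by_contra hp
  obtain ⟨ε, hε, δ, hδ, hb'⟩ := hb p hp
  obtain ⟨φ, hφ, hlim⟩ := hacc
  set g : ℕ → ℝ := fun k => f (seq k) with hg
  have hmono : Monotone g := monotone_nat_of_le_succ ha
  have h1 : Filter.Tendsto (fun k => g (φ k)) Filter.atTop (nhds (f p)) :=
    (hf.tendsto p).comp hlim
  have hle : ∀ m, g m ≤ f p := by
    intro m
    refine ge_of_tendsto h1 ?_
    filter_upwards [Filter.eventually_ge_atTop m] with k hk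
    exact hmono (le_trans hk hφ.le_apply)
  have hc1 : Filter.Tendsto
      (fun k => ((seq (φ k)).1 : Matrix (Fin n) (Fin n) ℝ)) Filter.atTop
      (nhds (p.1 : Matrix (Fin n) (Fin n) ℝ)) :=
    ((continuous_subtype_val.comp continuous_fst).tendsto p).comp hlim
  have hc2 : Filter.Tendsto
      (fun k => ((seq (φ k)).2.1 : Matrix (Fin n) (Fin n) ℝ)) Filter.atTop
      (nhds (p.2.1 : Matrix (Fin n) (Fin n) ℝ)) :=
    ((continuous_subtype_val.comp (continuous_fst.comp continuous_snd)).tendsto p).comp hlim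
  have hc3 : Filter.Tendsto
      (fun k => ((seq (φ k)).2.2 : Matrix (Fin n) (Fin n) ℝ)) Filter.atTop
      (nhds (p.2.2 : Matrix (Fin n) (Fin n) ℝ)) :=
    ((continuous_subtype_val.comp (continuous_snd.comp continuous_snd)).tendsto p).comp hlim
  have e1 : ∀ᶠ k in Filter.atTop,
      ‖((seq (φ k)).1 : Matrix (Fin n) (Fin n) ℝ) - (p.1 : Matrix (Fin n) (Fin n) ℝ)‖ < ε := by
    filter_upwards [Metric.tendsto_nhds.mp hc1 ε hε] with k hk
    rwa [dist_eq_norm] at hk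
  have e2 : ∀ᶠ k in Filter.atTop,
      ‖((seq (φ k)).2.1 : Matrix (Fin n) (Fin n) ℝ) - (p.2.1 : Matrix (Fin n) (Fin n) ℝ)‖ < ε := by
    filter_upwards [Metric.tendsto_nhds.mp hc2 ε hε] with k hk
    rwa [dist_eq_norm] at hk
  have e3 : ∀ᶠ k in Filter.atTop,
      ‖((seq (φ k)).2.2 : Matrix (Fin n) (Fin n) ℝ) - (p.2.2 : Matrix (Fin n) (Fin n) ℝ)‖ < ε := by
    filter_upwards [Metric.tendsto_nhds.mp hc3 ε hε] with k hk
    rwa [dist_eq_norm] at hk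
  have e4 : ∀ᶠ k in Filter.atTop, f p - δ < g (φ k) :=
    h1.eventually (eventually_gt_nhds (by linarith))
  obtain ⟨k, ⟨ha1, ha2⟩, ha3, ha4⟩ := ((e1.and e2).and (e3.and e4)).exists
  have := hb' (φ k) ha1 ha2 ha3
  have := hle (φ k + 1)
  have h2 := ha4
  simp only [hg] at *
  linarith
end

section
/- Let f̃ be as above and define Λ(U) = (Uᵀ∇_U f̃ − (∇_U f̃)ᵀU)/2 for orthogonal U. Then, writing S = A ×₁Uᵀ ×₂Vᵀ ×₃Wᵀ, the entries of Λ(U) are Λ(U)_{lp} = S_{ppp} S_{lpp} − S_{lll} S_{pll}. -/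
open scoped BigOperators
open Matrix

/-- The smooth extension f̃(U,V,W) = Σ_l (Σ_{i,j,k} a_{ijk} u_{il} v_{jl} w_{kl})². -/
noncomputable def ftilde (n : ℕ) (A : Fin n → Fin n → Fin n → ℝ)
    (U V W : Matrix (Fin n) (Fin n) ℝ) : ℝ :=
  ∑ l : Fin n,
    (∑ i : Fin n, ∑ j : Fin n, ∑ k : Fin n, A i j k * U i l * V j l * W k l) ^ 2

/-- The matrix of partial derivatives ∂f̃/∂u_{ml} of f̃ with respect to U. -/
noncomputable def gradU (n : ℕ) (A : Fin n → Fin n → Fin n → ℝ)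
    (U V W : Matrix (Fin n) (Fin n) ℝ) : Matrix (Fin n) (Fin n) ℝ :=
  fun m l => deriv
    (fun t : ℝ =>
      ftilde n A (fun a b => if a = m ∧ b = l then t else U a b) V W)
    (U m l)

/-- The transformed tensor S = A ×₁ Uᵀ ×₂ Vᵀ ×₃ Wᵀ. -/
noncomputable def coreTensor (n : ℕ) (A : Fin n → Fin n → Fin n → ℝ)
    (U V W : Matrix (Fin n) (Fin n) ℝ) : Fin n → Fin n → Fin n → ℝ :=
  fun i j k => ∑ a : Fin n, ∑ b : Fin n, ∑ c : Fin n,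
    A a b c * U a i * V b j * W c k

lemma gradU_eq (n : ℕ) (A : Fin n → Fin n → Fin n → ℝ)
    (U V W : Matrix (Fin n) (Fin n) ℝ) (m l : Fin n) :
    gradU n A U V W m l =
      2 * coreTensor n A U V W l l l *
        (∑ j : Fin n, ∑ k : Fin n, A m j k * V j l * W k l) := by
  have key : ∀ q : Fin n, HasDerivAt
      (fun t : ℝ => ∑ i : Fin n, ∑ j : Fin n, ∑ k : Fin n,
        A i j k * (if i = m ∧ q = l then t else U i q) * V j q * W k q)
      (∑ i : Fin n, ∑ j : Fin n, ∑ k : Fin n,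
        if i = m ∧ q = l then A i j k * V j q * W k q else 0) (U m l) := by
    intro q
    apply HasDerivAt.fun_sum; intro i _
    apply HasDerivAt.fun_sum; intro j _
    apply HasDerivAt.fun_sum; intro k _
    by_cases h : i = m ∧ q = l
    · simp only [if_pos h]
      have he : (fun t : ℝ => A i j k * t * V j q * W k q)
          = fun t => (A i j k * V j q * W k q) * t := by funext t; ring
      rw [he]
      simpa using (hasDerivAt_id (U m l)).const_mul (A i j k * V j q * W k q)
    · simp only [if_neg h]; exact hasDerivAt_const _ _
  have main : HasDerivAt
      (fun t : ℝ => ftilde n A (fun a b => if a = m ∧ b = l then t else U a b) V W)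
      (∑ q : Fin n, (2 : ℝ) *
        (∑ i : Fin n, ∑ j : Fin n, ∑ k : Fin n,
          A i j k * (if i = m ∧ q = l then U m l else U i q) * V j q * W k q) ^ 1 *
        (∑ i : Fin n, ∑ j : Fin n, ∑ k : Fin n,
          if i = m ∧ q = l then A i j k * V j q * W k q else 0)) (U m l) := by
    unfold ftilde
    apply HasDerivAt.fun_sum; intro q _
    have := (key q).fun_pow 2
    simpa using this
  rw [gradU, main.deriv]
  rw [Finset.sum_eq_single l]
  · have h1 : (∑ i : Fin n, ∑ j : Fin n, ∑ k : Fin n,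
        A i j k * (if i = m ∧ l = l then U m l else U i l) * V j l * W k l)
        = coreTensor n A U V W l l l := by
      unfold coreTensor
      apply Finset.sum_congr rfl; intro i _
      apply Finset.sum_congr rfl; intro j _
      apply Finset.sum_congr rfl; intro k _
      by_cases h : i = m
      · subst h; simp
      · simp [h]
    have h2 : (∑ i : Fin n, ∑ j : Fin n, ∑ k : Fin n,
        if i = m ∧ l = l then A i j k * V j l * W k l else 0)
        = ∑ j : Fin n, ∑ k : Fin n, A m j k * V j l * W k l := by
      simp
    rw [h1, h2]; ring
  · intro q _ hq
    have : ∀ i j k : Fin n, (if i = m ∧ q = l then A i j k * V j q * W k q else 0) = 0 := by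
      intro i j k; simp [hq]
    simp [this]
  · intro h; exact absurd (Finset.mem_univ l) h

theorem lambda_entries (n : ℕ) (A : Fin n → Fin n → Fin n → ℝ)
    (U V W : Matrix (Fin n) (Fin n) ℝ)
    (hU : Uᵀ * U = 1) (hV : Vᵀ * V = 1) (hW : Wᵀ * W = 1) (l p : Fin n) :
    let G := gradU n A U V W
    let S := coreTensor n A U V W
    ((1 / 2 : ℝ) • (Uᵀ * G - Gᵀ * U)) l p =
      S p p p * S l p p - S l l l * S p l l := by
  intro G S
  have core_eq : ∀ l' p' : Fin n, S l' p' p'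
      = ∑ a : Fin n, U a l' * (∑ j : Fin n, ∑ k : Fin n, A a j k * V j p' * W k p') := by
    intro l' p'
    show coreTensor n A U V W l' p' p' = _
    unfold coreTensor
    apply Finset.sum_congr rfl; intro a _
    rw [Finset.mul_sum]
    apply Finset.sum_congr rfl; intro b _
    rw [Finset.mul_sum]
    apply Finset.sum_congr rfl; intro c _
    ring
  have hG : ∀ m q : Fin n, G m q = 2 * S q q q * (∑ j : Fin n, ∑ k : Fin n, A m j k * V j q * W k q) :=
    fun m q => gradU_eq n A U V W m q
  simp only [Matrix.smul_apply, Matrix.sub_apply, Matrix.mul_apply, Matrix.transpose_apply,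
    smul_eq_mul]
  have e1 : (∑ m : Fin n, U m l * G m p) = 2 * S p p p * S l p p := by
    rw [core_eq l p, Finset.mul_sum]
    apply Finset.sum_congr rfl; intro m _
    rw [hG m p]; ring
  have e2 : (∑ m : Fin n, G m l * U m p) = 2 * S l l l * S p l l := by
    rw [core_eq p l, Finset.mul_sum]
    apply Finset.sum_congr rfl; intro m _
    rw [hG m l]; ring
  rw [e1, e2]; ring
end
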